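/- Let G = (V,E) be any multigraph on four vertices and let v ∈ V. Then G is f_{G,v}-edge-choosable, where f_{G,v}(e) = d_G(v) if the edge e is incident to v, and f_{G,v}(e) = χ'(G) otherwise. -/

import Mathlib

open scoped Classical

/-- A multigraph on vertex type `V` with edge type `E`: each edge has a pair of
distinct endpoints (no loops); multiple edges with the same endpoints are allowed. -/
structure Multigraph (V : Type*) (E : Type*) where
  ends : E → Sym2 V
  not_isDiag : ∀ e, ¬ (ends e).IsDiag

namespace Multigraph

variable {V E : Type*}

/-- The line graph of a multigraph: vertices are the edges of `G`,
two of them adjacent iff the corresponding edges share an endpoint. -/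
def lineGraph (G : Multigraph V E) : SimpleGraph E where
  Adj e q := e ≠ q ∧ ∃ x, x ∈ G.ends e ∧ x ∈ G.ends q
  symm := by
    constructor
    rintro e q ⟨hne, x, he, hq⟩
    exact ⟨hne.symm, x, hq, he⟩
  loopless := ⟨fun e h => h.1 rfl⟩

/-- The degree of a vertex: the number of incident edges. -/
noncomputable def degree (G : Multigraph V E) (x : V) : ℕ :=
  {e : E | x ∈ G.ends e}.ncard

end Multigraph

/-- A simple graph `H` is `f`-choosable if from any assignment of color lists
of sizes prescribed by `f` one can choose a proper coloring. -/
def Choosable {α : Type*} (H : SimpleGraph α) (f : α → ℕ) : Prop :=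
  ∀ A : α → Finset ℕ, (∀ x, (A x).card = f x) →
    ∃ c : α → ℕ, (∀ x, c x ∈ A x) ∧ ∀ ⦃x y⦄, H.Adj x y → c x ≠ c y

/-- The chromatic number of a simple graph, as a natural number. -/
noncomputable def chromNum {α : Type*} (H : SimpleGraph α) : ℕ :=
  sInf {n | H.Colorable n}

/-- The choice number (list chromatic number) of a simple graph. -/
noncomputable def listChromNum {α : Type*} (H : SimpleGraph α) : ℕ :=
  sInf {n | Choosable H fun _ => n}

/-- The clique number: the size of a maximum clique. -/
noncomputable def cliqNum {α : Type*} (H : SimpleGraph α) : ℕ :=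
  sSup {n | ∃ s : Finset α, H.IsNClique n s}

/-- A graph is perfect if every induced subgraph has chromatic number
equal to its clique number. -/
def IsPerfect {α : Type*} (H : SimpleGraph α) : Prop :=
  ∀ s : Set α, chromNum (H.induce s) = cliqNum (H.induce s)

/-!
Two edges of a multigraph on four vertices that do not meet are vertex-disjoint and together
cover all four vertices, so exactly one of them passes through `v`. Hence the complement of the
line graph is a disjoint union of complete bipartite graphs whose sides are separated by
incidence with `v`.

For such graphs the lists are handled by induction. If two non-meeting edges share a colour,
give both of them that colour and delete it from all other lists: every remaining clique extends
by one of the two edges, so the clique bound drops by one, and so does the number of edges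
at `v`. Otherwise non-meeting edges have disjoint lists and Hall's theorem gives distinct
colours: a set of edges containing a non-meeting pair `a ∋ v`, `b ∌ v` sees at least
`|A a| + |A b| ≥ d(v) + χ'` colours, since the edges avoiding `v` pairwise meet; any other set
of edges is a clique, of size at most `χ'`, or consists of edges at `v` only.
-/

open Finset

lemma Finset.exists_injOn_mem_of_forall_card_le_card_biUnion {α β : Type*} [DecidableEq β]
    [Inhabited β] {D : Finset α} {A : α → Finset β} (hall : ∀ S ⊆ D, #S ≤ #(S.biUnion A)) :
    ∃ c : α → β, (∀ e ∈ D, c e ∈ A e) ∧ Set.InjOn c D := by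
  have hall' : ∀ s : Finset D, #s ≤ #(s.biUnion fun x => A x) := fun s => by
    have h := hall (s.image Subtype.val) fun x hx => by
      obtain ⟨y, -, rfl⟩ := mem_image.1 hx
      exact y.2
    rwa [image_biUnion, card_image_of_injective _ Subtype.val_injective] at h
  obtain ⟨f, hinj, hmem⟩ := (all_card_le_biUnion_card_iff_exists_injective _).1 hall'
  refine ⟨fun x => if hx : x ∈ D then f ⟨x, hx⟩ else default, fun x hx => ?_, ?_⟩
  · simpa [hx] using hmem ⟨x, hx⟩
  · intro x hx y hy hxy
    rw [mem_coe] at hx hy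
    simp only [dif_pos hx, dif_pos hy] at hxy
    simpa using hinj hxy

namespace SimpleGraph

variable {α β : Type*}

def IsListColoringOn (H : SimpleGraph α) (D : Finset α) (A : α → Finset β) (c : α → β) : Prop :=
  (∀ e ∈ D, c e ∈ A e) ∧ ∀ e ∈ D, ∀ e' ∈ D, H.Adj e e' → c e ≠ c e'

lemma isListColoringOn_of_injOn {H : SimpleGraph α} {D : Finset α} {A : α → Finset β}
    {c : α → β} (hmem : ∀ e ∈ D, c e ∈ A e) (hinj : Set.InjOn c D) :
    H.IsListColoringOn D A c :=
  ⟨hmem, fun _ he _ he' hadj hc => H.ne_of_adj hadj (hinj he he' hc)⟩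

lemma IsListColoringOn.extend_pair [DecidableEq β] {H : SimpleGraph α} {D : Finset α}
    {A : α → Finset β} {c : α → β} {e e' : α} {c₀ : β}
    (hc : H.IsListColoringOn (D \ {e, e'}) (fun x => (A x).erase c₀) c)
    (he : c₀ ∈ A e) (he' : c₀ ∈ A e') (hnadj : ¬ H.Adj e e') :
    H.IsListColoringOn D A (fun x => if x = e ∨ x = e' then c₀ else c x) := by
  have hmem_sdiff : ∀ x ∈ D, ¬ (x = e ∨ x = e') → x ∈ D \ {e, e'} := fun x hx hxe => by
    simpa [not_or] using ⟨hx, not_or.1 hxe⟩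
  constructor
  · intro x hx
    dsimp only
    split_ifs with hxe
    · rcases hxe with rfl | rfl <;> assumption
    · exact mem_of_mem_erase (hc.1 x (hmem_sdiff x hx hxe))
  · intro x hx y hy hadj
    dsimp only
    split_ifs with hxe hye hye
    · rcases hxe with rfl | rfl <;> rcases hye with rfl | rfl
      all_goals simp_all [adj_comm]
    · exact (ne_of_mem_erase (hc.1 y (hmem_sdiff y hy hye))).symm
    · exact ne_of_mem_erase (hc.1 x (hmem_sdiff x hx hxe))
    · exact hc.2 x (hmem_sdiff x hx hxe) y (hmem_sdiff y hy hye) hadj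

/-- The complement of `H` is a disjoint union of complete bipartite graphs, each with one side
in `P` and the other outside `P`. -/
structure ComplBicliques (H : SimpleGraph α) (P : α → Prop) : Prop where
  compl_adj_iff : ∀ ⦃e e'⦄, Hᶜ.Adj e e' → (P e ↔ ¬ P e')
  compl_adj_of_path : ∀ ⦃s e e' s'⦄, Hᶜ.Adj s e → Hᶜ.Adj e e' → Hᶜ.Adj e' s' → Hᶜ.Adj s s'

namespace ComplBicliques

variable {H : SimpleGraph α} {P : α → Prop}

lemma isClique_filter_not (hH : H.ComplBicliques P) (S : Finset α) :
    H.IsClique ({x ∈ S | ¬ P x} : Finset α) := by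
  intro x hx y hy hxy
  simp only [coe_filter, Set.mem_ofPred_eq] at hx hy
  by_contra hnadj
  exact hx.2 ((hH.compl_adj_iff ((H.compl_adj x y).2 ⟨hxy, hnadj⟩)).2 hy.2)

lemma isClique_insert_or_isClique_insert (hH : H.ComplBicliques P) {S : Finset α}
    (hS : H.IsClique (S : Set α)) {e e' : α} (hee' : Hᶜ.Adj e e') (he : e ∉ S) :
    H.IsClique (↑(insert e S) : Set α) ∨ H.IsClique (↑(insert e' S) : Set α) := by
  rw [coe_insert, coe_insert]
  by_cases hadj : ∀ s ∈ S, H.Adj e s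
  · exact .inl (isClique_insert.2 ⟨hS, fun s hs _ => hadj s hs⟩)
  · push Not at hadj
    obtain ⟨s₀, hs₀, hnadj⟩ := hadj
    have hs₀e : Hᶜ.Adj s₀ e :=
      (H.compl_adj s₀ e).2 ⟨ne_of_mem_of_not_mem hs₀ he, fun h => hnadj h.symm⟩
    refine .inr (isClique_insert.2 ⟨hS, fun s hs hne => ?_⟩)
    by_contra hnadj'
    have hs₀s := hH.compl_adj_of_path hs₀e hee' ((H.compl_adj e' s).2 ⟨hne, hnadj'⟩)
    exact ((H.compl_adj s₀ s).1 hs₀s).2 (hS hs₀ hs ((H.compl_adj s₀ s).1 hs₀s).1)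

lemma card_le_pred_of_isClique_sdiff (hH : H.ComplBicliques P) {D : Finset α} {k : ℕ}
    (hclique : ∀ S ⊆ D, H.IsClique (S : Set α) → #S ≤ k) {e e' : α} (he : e ∈ D) (he' : e' ∈ D)
    (hee' : Hᶜ.Adj e e') : ∀ S ⊆ D \ {e, e'}, H.IsClique (S : Set α) → #S ≤ k - 1 := by
  intro S hSD hS
  have heS : e ∉ S := fun h => by simpa using hSD h
  have he'S : e' ∉ S := fun h => by simpa using hSD h
  have hSD' : S ⊆ D := hSD.trans sdiff_subset
  rcases hH.isClique_insert_or_isClique_insert hS hee' heS with h | h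
  · have := hclique _ (insert_subset he hSD') h
    rw [card_insert_of_notMem heS] at this
    omega
  · have := hclique _ (insert_subset he' hSD') h
    rw [card_insert_of_notMem he'S] at this
    omega

lemma card_le_card_biUnion [DecidableEq β] (hH : H.ComplBicliques P) {D : Finset α} {k : ℕ}
    {A : α → Finset β} (hclique : ∀ S ⊆ D, H.IsClique (S : Set α) → #S ≤ k)
    (hP : ∀ e ∈ D, P e → #{x ∈ D | P x} ≤ #(A e)) (hnP : ∀ e ∈ D, ¬ P e → k ≤ #(A e))
    (hdisj : ∀ e ∈ D, ∀ e' ∈ D, Hᶜ.Adj e e' → Disjoint (A e) (A e'))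
    {S : Finset α} (hSD : S ⊆ D) : #S ≤ #(S.biUnion A) := by
  by_cases hpair : ∃ a ∈ S, ∃ b ∈ S, Hᶜ.Adj a b ∧ P a
  · obtain ⟨a, ha, b, hb, hab, hPa⟩ := hpair
    have hPb : ¬ P b := (hH.compl_adj_iff hab).1 hPa
    calc #S = #{x ∈ S | P x} + #{x ∈ S | ¬ P x} := (card_filter_add_card_filter_not _).symm
      _ ≤ #(A a) + #(A b) := add_le_add
          ((card_le_card (filter_subset_filter _ hSD)).trans (hP a (hSD ha) hPa))
          ((hclique _ ((filter_subset _ _).trans hSD) (hH.isClique_filter_not S)).trans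
            (hnP b (hSD hb) hPb))
      _ = #(A a ∪ A b) := (card_union_of_disjoint (hdisj a (hSD ha) b (hSD hb) hab)).symm
      _ ≤ #(S.biUnion A) := card_le_card (union_subset (subset_biUnion_of_mem A ha)
          (subset_biUnion_of_mem A hb))
  push Not at hpair
  have hS : H.IsClique (S : Set α) := fun x hx y hy hxy => by
    by_contra hnadj
    have hxy' : Hᶜ.Adj x y := (H.compl_adj x y).2 ⟨hxy, hnadj⟩
    exact hpair x hx y hy hxy' ((hH.compl_adj_iff hxy').2 (hpair y hy x hx hxy'.symm))
  have hsub : ∀ e ∈ S, #(A e) ≤ #(S.biUnion A) := fun e he =>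
    card_le_card (subset_biUnion_of_mem A he)
  obtain rfl | ⟨a, ha⟩ := S.eq_empty_or_nonempty
  · simp
  by_cases hnP_mem : ∃ b ∈ S, ¬ P b
  · obtain ⟨b, hb, hPb⟩ := hnP_mem
    exact (hclique S hSD hS).trans ((hnP b (hSD hb) hPb).trans (hsub b hb))
  · push Not at hnP_mem
    calc #S ≤ #{x ∈ D | P x} := card_le_card fun x hx => mem_filter.2 ⟨hSD hx, hnP_mem x hx⟩
      _ ≤ #(A a) := hP a (hSD ha) (hnP_mem a ha)
      _ ≤ #(S.biUnion A) := hsub a ha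

theorem exists_isListColoringOn [DecidableEq β] [Inhabited β] (hH : H.ComplBicliques P)
    (D : Finset α) (k : ℕ) (A : α → Finset β)
    (hclique : ∀ S ⊆ D, H.IsClique (S : Set α) → #S ≤ k)
    (hP : ∀ e ∈ D, P e → #{x ∈ D | P x} ≤ #(A e)) (hnP : ∀ e ∈ D, ¬ P e → k ≤ #(A e)) :
    ∃ c, H.IsListColoringOn D A c := by
  induction D using Finset.strongInduction generalizing k A with
  | H D ih =>
  by_cases hshare : ∃ e ∈ D, ∃ e' ∈ D, Hᶜ.Adj e e' ∧ P e ∧ ¬ Disjoint (A e) (A e')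
  · obtain ⟨e, he, e', he', hee', hPe, hshared⟩ := hshare
    obtain ⟨c₀, hc₀e, hc₀e'⟩ := not_disjoint_iff.1 hshared
    have hfewer : #{x ∈ D \ {e, e'} | P x} < #{x ∈ D | P x} :=
      card_lt_card ((ssubset_iff_of_subset (filter_subset_filter _ sdiff_subset)).2
        ⟨e, mem_filter.2 ⟨he, hPe⟩, by simp⟩)
    have herase : ∀ x, #(A x) - 1 ≤ #((A x).erase c₀) := fun x => pred_card_le_card_erase
    obtain ⟨c, hc⟩ := ih (D \ {e, e'})
      (sdiff_ssubset (by simp [insert_subset_iff, he, he']) (insert_nonempty _ _))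
      (k - 1) (fun x => (A x).erase c₀) (hH.card_le_pred_of_isClique_sdiff hclique he he' hee')
      (fun x hx hPx => by have := hP x (sdiff_subset hx) hPx; have := herase x; omega)
      (fun x hx hPx => by have := hnP x (sdiff_subset hx) hPx; have := herase x; omega)
    exact ⟨_, hc.extend_pair hc₀e hc₀e' ((H.compl_adj e e').1 hee').2⟩
  · push Not at hshare
    have hdisj : ∀ e ∈ D, ∀ e' ∈ D, Hᶜ.Adj e e' → Disjoint (A e) (A e') := by
      intro e he e' he' hee'
      by_cases hPe : P e
      · exact hshare e he e' he' hee' hPe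
      · exact (hshare e' he' e he hee'.symm ((hH.compl_adj_iff hee'.symm).2 hPe)).symm
    obtain ⟨c, hmem, hinj⟩ := exists_injOn_mem_of_forall_card_le_card_biUnion fun S hS =>
      hH.card_le_card_biUnion hclique hP hnP hdisj hS
    exact ⟨c, isListColoringOn_of_injOn hmem hinj⟩

end ComplBicliques

lemma IsClique.card_le_chromNum [Fintype α] {H : SimpleGraph α} {S : Finset α}
    (hS : H.IsClique (S : Set α)) : #S ≤ chromNum H :=
  hS.card_le_of_colorable (Nat.sInf_mem (s := {n | H.Colorable n}) ⟨_, H.colorable_of_fintype⟩)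

end SimpleGraph

namespace Multigraph

variable {V E : Type*}

lemma degree_eq_card_filter [Fintype E] (G : Multigraph V E) (x : V) :
    G.degree x = #{e | x ∈ G.ends e} := by
  simp [degree, Set.ncard_eq_toFinset_card']

lemma mem_ends_iff_notMem_ends_of_compl_adj [Fintype V] (G : Multigraph V E)
    (hcard : Fintype.card V = 4) {e e' : E} (h : G.lineGraphᶜ.Adj e e') (x : V) :
    x ∈ G.ends e ↔ x ∉ G.ends e' := by
  obtain ⟨hne, hnadj⟩ := (G.lineGraph.compl_adj e e').1 h
  have hdisj : Disjoint (G.ends e).toFinset (G.ends e').toFinset := disjoint_left.2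
    fun y hy hy' => hnadj ⟨hne, y, Sym2.mem_toFinset.1 hy, Sym2.mem_toFinset.1 hy'⟩
  have hcover : (G.ends e).toFinset ∪ (G.ends e').toFinset = univ := by
    apply eq_univ_of_card
    rw [card_union_of_disjoint hdisj, Sym2.card_toFinset_of_not_isDiag _ (G.not_isDiag e),
      Sym2.card_toFinset_of_not_isDiag _ (G.not_isDiag e'), hcard]
  have hx : x ∈ (G.ends e).toFinset ∪ (G.ends e').toFinset := hcover ▸ mem_univ x
  rw [mem_union, Sym2.mem_toFinset, Sym2.mem_toFinset] at hx
  exact ⟨fun hxe hxe' => disjoint_left.1 hdisj (Sym2.mem_toFinset.2 hxe)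
    (Sym2.mem_toFinset.2 hxe'), hx.resolve_right⟩

lemma complBicliques_lineGraph [Fintype V] (G : Multigraph V E) (hcard : Fintype.card V = 4)
    (v : V) : G.lineGraph.ComplBicliques (v ∈ G.ends ·) where
  compl_adj_iff _ _ h := G.mem_ends_iff_notMem_ends_of_compl_adj hcard h v
  compl_adj_of_path s e e' s' hse hee' he's' := by
    have key : ∀ x, x ∈ G.ends s ↔ x ∉ G.ends s' := fun x => by
      rw [G.mem_ends_iff_notMem_ends_of_compl_adj hcard hse,
        G.mem_ends_iff_notMem_ends_of_compl_adj hcard hee',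
        G.mem_ends_iff_notMem_ends_of_compl_adj hcard he's', not_not]
    rw [SimpleGraph.compl_adj]
    refine ⟨?_, fun ⟨_, x, hx, hx'⟩ => (key x).1 hx hx'⟩
    rintro rfl
    obtain ⟨x⟩ : Nonempty V := Fintype.card_pos_iff.1 (by omega)
    exact iff_not_self (key x)

end Multigraph

/-- For a multigraph `G` on four vertices and any vertex `v`, `G` is
`f_{G,v}`-edge-choosable, where `f_{G,v}(e) = d_G(v)` for edges incident to `v`
and `f_{G,v}(e) = χ'(G)` otherwise. -/
theorem stmt_4 {V E : Type*} [Fintype V] [Fintype E] (G : Multigraph V E)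
    (hcard : Fintype.card V = 4) (v : V) :
    Choosable (Multigraph.lineGraph G)
      (fun e => if v ∈ G.ends e then G.degree v else chromNum (Multigraph.lineGraph G)) := by
  intro A hA
  obtain ⟨c, hmem, hproper⟩ := (G.complBicliques_lineGraph hcard v).exists_isListColoringOn
    univ (chromNum G.lineGraph) A (fun S _ hS => hS.card_le_chromNum)
    (fun e _ he => by
      simp only [hA e, if_pos he, G.degree_eq_card_filter]
      exact card_le_card fun x hx => by simpa using hx)
    (fun e _ he => by simp [hA e, he])
  exact ⟨c, fun e => hmem e (mem_univ e),
    fun e e' hadj => hproper e (mem_univ e) e' (mem_univ e') hadj⟩
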